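/- arXiv:0809.4741 — 5 statements merged into one kernel-verified Lean document; each statement's English description precedes it below -/
import Mathlib

section
/- The function $\Lambda(\lambda) = \log\big(\frac{(e^{\lambda}-1)^2}{2(e^{\lambda}-1-\lambda)}\big)$ for $\lambda \neq 0$, extended by $\Lambda(0) = 0$, is a smooth (infinitely differentiable) function on $\mathbb{R}$ and satisfies the differential equation $e^{\Lambda(\lambda)} = \frac{1-e^{\lambda}}{2}\Lambda'(\lambda) + e^{\lambda}$ for all $\lambda \neq 0$. -/
open Real Filter

noncomputable def myc (k : ℕ) : ℕ → ℝ := fun n => (((n + k).factorial : ℝ))⁻¹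

noncomputable def myE (k : ℕ) : ℝ → ℝ := FormalMultilinearSeries.ofScalarsSum (myc k)

lemma myc_pos (k n : ℕ) : 0 < myc k n := by
  simp only [myc]
  positivity

lemma myE_radius (k : ℕ) : (FormalMultilinearSeries.ofScalars ℝ (myc k)).radius = ⊤ := by
  apply FormalMultilinearSeries.ofScalars_radius_eq_top_of_tendsto
  · exact Eventually.of_forall fun n => (myc_pos k n).ne'
  · have heq : (fun n : ℕ => ‖myc k n.succ‖ / ‖myc k n‖)
        = fun n : ℕ => (((n + k : ℕ) : ℝ) + 1)⁻¹ := by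
      funext n
      rw [Real.norm_of_nonneg (myc_pos k _).le, Real.norm_of_nonneg (myc_pos k _).le]
      simp only [myc]
      have h1 : n.succ + k = (n + k) + 1 := by omega
      rw [h1, Nat.factorial_succ, div_eq_iff (by positivity)]
      push_cast
      field_simp
    rw [heq]
    have h0 : Tendsto (fun n : ℕ => ((n : ℝ) + 1)⁻¹) atTop (nhds 0) :=
      tendsto_one_div_add_atTop_nhds_zero_nat.congr (by intro n; rw [one_div])
    exact h0.comp (tendsto_add_atTop_nat k)

lemma myE_analyticAt (k : ℕ) : AnalyticAt ℝ (myE k) 0 := by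
  have := (FormalMultilinearSeries.ofScalars ℝ (myc k)).hasFPowerSeriesOnBall
    (by rw [myE_radius]; exact ENNReal.zero_lt_top)
  exact this.analyticAt

lemma myE_hasSum (k : ℕ) (x : ℝ) :
    HasSum (fun n => x ^ n / ((n + k).factorial : ℝ)) (myE k x) := by
  have hball := (FormalMultilinearSeries.ofScalars ℝ (myc k)).hasFPowerSeriesOnBall
    (by rw [myE_radius]; exact ENNReal.zero_lt_top)
  have := hball.hasSum (y := x) (by rw [myE_radius]; exact edist_lt_top _ _)
  rw [zero_add] at this
  have happ : ∀ n : ℕ, (FormalMultilinearSeries.ofScalars ℝ (myc k) n fun _ => x)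
      = x ^ n / ((n + k).factorial : ℝ) := by
    intro n
    rw [FormalMultilinearSeries.ofScalars_apply_eq]
    simp [myc, div_eq_mul_inv, mul_comm]
  have h2 : HasSum (fun n => x ^ n / ((n + k).factorial : ℝ))
      ((FormalMultilinearSeries.ofScalars ℝ (myc k)).sum x) := by
    refine HasSum.congr_fun this fun n => (happ n).symm
  exact h2

lemma myE_zero (k : ℕ) : myE k 0 = ((k.factorial : ℝ))⁻¹ := by
  simp [myE, myc]

lemma myE_one_val (x : ℝ) (hx : x ≠ 0) : myE 1 x = (Real.exp x - 1) / x := by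
  have hexp : HasSum (fun n => x ^ n / (n.factorial : ℝ)) (Real.exp x) := by
    rw [Real.exp_eq_exp_ℝ]; exact NormedSpace.expSeries_div_hasSum_exp x
  have h1 : HasSum (fun n : ℕ => x ^ (n + 1) / ((n + 1).factorial : ℝ))
      (Real.exp x - ∑ i ∈ Finset.range 1, x ^ i / (i.factorial : ℝ)) :=
    (hasSum_nat_add_iff' 1).2 hexp
  simp only [Finset.range_one, Finset.sum_singleton, pow_zero, Nat.factorial_zero,
    Nat.cast_one, div_one] at h1
  have h2 := h1.mul_right x⁻¹
  have h3 : (fun n : ℕ => x ^ (n + 1) / ((n + 1).factorial : ℝ) * x⁻¹)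
      = fun n : ℕ => x ^ n / ((n + 1).factorial : ℝ) := by
    funext n
    rw [pow_succ]
    field_simp
  rw [h3] at h2
  have := (myE_hasSum 1 x).unique h2
  rw [this, div_eq_mul_inv]

lemma myE_two_val (x : ℝ) (hx : x ≠ 0) : myE 2 x = (Real.exp x - 1 - x) / x ^ 2 := by
  have hexp : HasSum (fun n => x ^ n / (n.factorial : ℝ)) (Real.exp x) := by
    rw [Real.exp_eq_exp_ℝ]; exact NormedSpace.expSeries_div_hasSum_exp x
  have h1 : HasSum (fun n : ℕ => x ^ (n + 2) / ((n + 2).factorial : ℝ))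
      (Real.exp x - ∑ i ∈ Finset.range 2, x ^ i / (i.factorial : ℝ)) :=
    (hasSum_nat_add_iff' 2).2 hexp
  have hs : ∑ i ∈ Finset.range 2, x ^ i / (i.factorial : ℝ) = 1 + x := by
    simp [Finset.sum_range_succ]
  rw [hs] at h1
  have h2 := h1.mul_right (x ^ 2)⁻¹
  have h3 : (fun n : ℕ => x ^ (n + 2) / ((n + 2).factorial : ℝ) * (x ^ 2)⁻¹)
      = fun n : ℕ => x ^ n / ((n + 2).factorial : ℝ) := by
    funext n
    rw [pow_add]
    field_simp
  rw [h3] at h2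
  have := (myE_hasSum 2 x).unique h2
  rw [this]
  rw [div_eq_mul_inv]
  ring_nf

lemma myE_two_pos (x : ℝ) : 0 < myE 2 x := by
  rcases eq_or_ne x 0 with h | h
  · rw [h, myE_zero]; norm_num
  · rw [myE_two_val x h]
    have := Real.add_one_lt_exp h
    have hx2 : 0 < x ^ 2 := by positivity
    apply div_pos (by linarith) hx2

lemma exp_sub_one_ne (l : ℝ) (hl : l ≠ 0) : Real.exp l - 1 ≠ 0 := by
  intro h
  apply hl
  have h2 : Real.exp l = Real.exp 0 := by rw [Real.exp_zero]; linarith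
  exact Real.exp_injective h2

/-- The pressure `Λ(λ) = log((e^λ-1)^2 / (2(e^λ-1-λ)))` (with `Λ(0)=0`) is smooth
and satisfies the ODE `e^{Λ(λ)} = (1-e^λ)/2 · Λ'(λ) + e^λ` for `λ ≠ 0`. -/
theorem pressure_alpha_two_smooth_and_ODE
    (Λ : ℝ → ℝ)
    (hΛ : ∀ l : ℝ, l ≠ 0 → Λ l = Real.log ((Real.exp l - 1) ^ 2 / (2 * (Real.exp l - 1 - l))))
    (hΛ0 : Λ 0 = 0) :
    ContDiff ℝ (⊤ : ℕ∞) Λ ∧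
      ∀ l : ℝ, l ≠ 0 →
        Real.exp (Λ l) = (1 - Real.exp l) / 2 * deriv Λ l + Real.exp l := by
  constructor
  · -- smoothness
    have hΛeq : Λ = fun x => Real.log ((myE 1 x) ^ 2 / (2 * myE 2 x)) := by
      funext x
      rcases eq_or_ne x 0 with h | h
      · rw [h, hΛ0, myE_zero, myE_zero]
        norm_num [Nat.factorial]
      · rw [hΛ x h, myE_one_val x h, myE_two_val x h]
        have hd : Real.exp x - 1 - x ≠ 0 := by
          have := Real.add_one_lt_exp h; intro hc; linarith
        congr 1
        field_simp
    rw [hΛeq]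
    rw [contDiff_iff_contDiffAt]
    intro x
    rcases eq_or_ne x 0 with h | h
    · subst h
      have h1 : ContDiffAt ℝ (⊤ : ℕ∞) (myE 1) 0 := (myE_analyticAt 1).contDiffAt
      have h2 : ContDiffAt ℝ (⊤ : ℕ∞) (myE 2) 0 := (myE_analyticAt 2).contDiffAt
      have hr : ContDiffAt ℝ (⊤ : ℕ∞) (fun x => (myE 1 x) ^ 2 / (2 * myE 2 x)) 0 := by
        apply ContDiffAt.div (h1.pow 2) (contDiffAt_const.mul h2)
        rw [myE_zero]; norm_num [Nat.factorial]
      apply hr.log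
      rw [myE_zero, myE_zero]; norm_num [Nat.factorial]
    · -- away from zero, equals smooth formula
      have hev : (fun x => Real.log ((myE 1 x) ^ 2 / (2 * myE 2 x)))
          =ᶠ[nhds x] fun y => Real.log ((Real.exp y - 1) ^ 2 / (2 * (Real.exp y - 1 - y))) := by
        filter_upwards [isOpen_compl_singleton.mem_nhds h] with y hy
        have hy' : y ≠ 0 := hy
        rw [myE_one_val y hy', myE_two_val y hy']
        have hd : Real.exp y - 1 - y ≠ 0 := by
          have := Real.add_one_lt_exp hy'; intro hc; linarith
        congr 1
        field_simp
      have hd : Real.exp x - 1 - x ≠ 0 := by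
        have := Real.add_one_lt_exp h; intro hc; linarith
      have hF : ContDiffAt ℝ (⊤ : ℕ∞)
          (fun y => Real.log ((Real.exp y - 1) ^ 2 / (2 * (Real.exp y - 1 - y)))) x := by
        apply ContDiffAt.log
        · apply ContDiffAt.div
          · exact (Real.contDiff_exp.contDiffAt.sub contDiffAt_const).pow 2
          · exact contDiffAt_const.mul
              ((Real.contDiff_exp.contDiffAt.sub contDiffAt_const).sub contDiffAt_id)
          · intro hc
            apply hd
            have h2 : (2 : ℝ) ≠ 0 := two_ne_zero
            field_simp at hc
            linarith
        · apply div_ne_zero (pow_ne_zero 2 (exp_sub_one_ne x h))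
          intro hc
          apply hd
          field_simp at hc
          linarith
      exact hF.congr_of_eventuallyEq hev
  · -- ODE
    intro l hl
    have hD : 0 < Real.exp l - 1 - l := by
      have := Real.add_one_lt_exp hl; linarith
    have hN : Real.exp l - 1 ≠ 0 := exp_sub_one_ne l hl
    have hB0 : 2 * (Real.exp l - 1 - l) ≠ 0 := by positivity
    -- derivative of the inner quotient
    have hA : HasDerivAt (fun x => (Real.exp x - 1) ^ 2)
        (2 * (Real.exp l - 1) ^ 1 * Real.exp l) l :=
      ((Real.hasDerivAt_exp l).sub_const 1).pow 2
    have hB : HasDerivAt (fun x => 2 * (Real.exp x - 1 - x)) (2 * (Real.exp l - 1)) l :=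
      (((Real.hasDerivAt_exp l).sub_const 1).sub (hasDerivAt_id l)).const_mul 2
    have hQ := hA.div hB hB0
    have hQval : (Real.exp l - 1) ^ 2 / (2 * (Real.exp l - 1 - l)) ≠ 0 :=
      div_ne_zero (pow_ne_zero 2 hN) hB0
    have hlog := hQ.log hQval
    have hΛG : (fun y => Real.log ((Real.exp y - 1) ^ 2 / (2 * (Real.exp y - 1 - y))))
        =ᶠ[nhds l] Λ := by
      filter_upwards [isOpen_compl_singleton.mem_nhds hl] with y hy
      exact (hΛ y hy).symm
    have hderiv : deriv Λ l =
        ((2 * (Real.exp l - 1) ^ 1 * Real.exp l) * (2 * (Real.exp l - 1 - l)) -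
          (Real.exp l - 1) ^ 2 * (2 * (Real.exp l - 1))) / (2 * (Real.exp l - 1 - l)) ^ 2 /
          ((Real.exp l - 1) ^ 2 / (2 * (Real.exp l - 1 - l))) := by
      rw [← hΛG.deriv_eq]
      exact hlog.deriv
    have hexpΛ : Real.exp (Λ l) = (Real.exp l - 1) ^ 2 / (2 * (Real.exp l - 1 - l)) := by
      rw [hΛ l hl]
      apply Real.exp_log
      apply div_pos
      · positivity
      · positivity
    rw [hexpΛ, hderiv]
    field_simp
    ring
end

section
/- Fix $\alpha > 1$. Define $\Lambda(\lambda) = -\log\Big(\frac{\alpha}{e^{\lambda}-1}\int_0^{\lambda} \big(\frac{e^s-1}{e^{\lambda}-1}\big)^{\alpha-1} ds\Big)$ for $\lambda \neq 0$ and $\Lambda(0) = 0$. Then $\Lambda$ is differentiable on $\mathbb{R} \setminus \{0\}$ and satisfies $e^{\Lambda(\lambda)} = \frac{1-e^{\lambda}}{\alpha}\Lambda'(\lambda) + e^{\lambda}$ for all $\lambda \neq 0$. -/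
open Real intervalIntegral Filter

lemma ode_aux (α c : ℝ) (hα : 0 < α) (Λ φ ψ : ℝ → ℝ) (l : ℝ)
    (hc : c * c = 1)
    (hφl : 0 < φ l) (hψl : 0 < ψ l)
    (hφ : HasDerivAt φ (c * Real.exp l) l)
    (hψ : HasDerivAt ψ (c * (φ l) ^ (α - 1)) l)
    (h1 : 1 - Real.exp l = -(c * φ l))
    (heq : Λ =ᶠ[nhds l] fun x => α * Real.log (φ x) - Real.log α - Real.log (ψ x)) :
    DifferentiableAt ℝ Λ l ∧
      Real.exp (Λ l) = (1 - Real.exp l) / α * deriv Λ l + Real.exp l := by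
  have hf : HasDerivAt (fun x => α * Real.log (φ x) - Real.log α - Real.log (ψ x))
      (α * (c * Real.exp l / φ l) - 0 - c * (φ l) ^ (α - 1) / ψ l) l :=
    (((hφ.log hφl.ne').const_mul α).sub (hasDerivAt_const l (Real.log α))).sub
      (hψ.log hψl.ne')
  have hdiff : DifferentiableAt ℝ Λ l := by
    rw [heq.differentiableAt_iff]; exact hf.differentiableAt
  have hderiv : deriv Λ l = α * (c * Real.exp l / φ l) - 0 - c * (φ l) ^ (α - 1) / ψ l := by
    rw [heq.deriv_eq, hf.deriv]
  have hΛl : Λ l = α * Real.log (φ l) - Real.log α - Real.log (ψ l) := heq.self_of_nhds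
  have hexp : Real.exp (Λ l) = (φ l) ^ α / (α * ψ l) := by
    rw [hΛl, Real.exp_sub, Real.exp_sub, Real.exp_log hψl, Real.exp_log hα,
      mul_comm α (Real.log (φ l)), ← Real.rpow_def_of_pos hφl, div_div]
  refine ⟨hdiff, ?_⟩
  rw [hexp, hderiv, h1]
  have hpow : (φ l) ^ (α - 1) = (φ l) ^ α / φ l := Real.rpow_sub_one hφl.ne' α
  rw [hpow]
  rcases mul_self_eq_one_iff.1 hc with h | h <;> subst h <;>
    field_simp <;> ring

/-- For `α > 1`, the pressure
`Λ(λ) = -log( α/(e^λ-1) ∫_0^λ ((e^s-1)/(e^λ-1))^{α-1} ds )` (with `Λ(0)=0`)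
is differentiable away from `0` and satisfies the ODE
`e^{Λ(λ)} = (1-e^λ)/α · Λ'(λ) + e^λ` for `λ ≠ 0`. -/
theorem pressure_general_alpha_ODE
    (α : ℝ) (hα : 1 < α) (Λ : ℝ → ℝ)
    (hΛ : ∀ l : ℝ, l ≠ 0 →
      Λ l = -Real.log (α / (Real.exp l - 1) *
        ∫ s in (0:ℝ)..l, ((Real.exp s - 1) / (Real.exp l - 1)) ^ (α - 1)))
    (hΛ0 : Λ 0 = 0) :
    ∀ l : ℝ, l ≠ 0 →
      DifferentiableAt ℝ Λ l ∧
        Real.exp (Λ l) = (1 - Real.exp l) / α * deriv Λ l + Real.exp l := by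
  have hα0 : (0:ℝ) < α := by linarith
  have hα1 : (0:ℝ) ≤ α - 1 := by linarith
  intro l hl
  rcases hl.lt_or_gt with hneg | hpos
  · -- l < 0
    set f : ℝ → ℝ := fun s => (1 - Real.exp s) ^ (α - 1) with hf
    have hcont : Continuous f := by
      rw [continuous_iff_continuousAt]
      intro s
      exact (Real.continuousAt_rpow_const _ _ (Or.inr hα1)).comp
        ((continuous_const.sub Real.continuous_exp).continuousAt)
    set ψ : ℝ → ℝ := fun x => ∫ s in x..(0:ℝ), f s with hψdef
    have hψpos : ∀ x : ℝ, x < 0 → 0 < ψ x := by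
      intro x hx
      refine intervalIntegral_pos_of_pos_on (hcont.intervalIntegrable x 0) ?_ hx
      intro s hs
      have : Real.exp s < 1 := by
        rw [← Real.exp_zero]; exact Real.exp_lt_exp.2 hs.2
      exact Real.rpow_pos_of_pos (by linarith) _
    have hφl : 0 < 1 - Real.exp l := by
      have : Real.exp l < 1 := by
        rw [← Real.exp_zero]; exact Real.exp_lt_exp.2 hneg
      linarith
    have heq : Λ =ᶠ[nhds l]
        fun x => α * Real.log (1 - Real.exp x) - Real.log α - Real.log (ψ x) := by
      filter_upwards [eventually_lt_nhds hneg] with x hx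
      have hB : 0 < 1 - Real.exp x := by
        have : Real.exp x < 1 := by
          rw [← Real.exp_zero]; exact Real.exp_lt_exp.2 hx
        linarith
      have hBα : (0:ℝ) < (1 - Real.exp x) ^ α := Real.rpow_pos_of_pos hB α
      have hψx : 0 < ψ x := hψpos x hx
      rw [hΛ x hx.ne]
      have hint : (∫ s in (0:ℝ)..x, ((Real.exp s - 1) / (Real.exp x - 1)) ^ (α - 1))
          = -(ψ x / (1 - Real.exp x) ^ (α - 1)) := by
        rw [intervalIntegral.integral_symm, ← intervalIntegral.integral_div]
        congr 1
        refine intervalIntegral.integral_congr fun s hs => ?_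
        rw [Set.uIcc_of_le hx.le] at hs
        have hs1 : 0 ≤ 1 - Real.exp s := by
          have : Real.exp s ≤ 1 := by
            rw [← Real.exp_zero]; exact Real.exp_le_exp.2 hs.2
          linarith
        have hratio : (Real.exp s - 1) / (Real.exp x - 1)
            = (1 - Real.exp s) / (1 - Real.exp x) := by
          rw [← neg_div_neg_eq]; ring_nf
        rw [hratio, Real.div_rpow hs1 hB.le]
      rw [hint]
      have hrw : α / (Real.exp x - 1) * -(ψ x / (1 - Real.exp x) ^ (α - 1))
          = α * ψ x / (1 - Real.exp x) ^ α := by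
        have h3 : (1 - Real.exp x) ^ (α - 1) * (1 - Real.exp x) = (1 - Real.exp x) ^ α := by
          rw [Real.rpow_sub_one hB.ne']; field_simp
        have hC : (1 - Real.exp x) ^ (α - 1) ≠ 0 := (Real.rpow_pos_of_pos hB _).ne'
        rw [← h3, show Real.exp x - 1 = -(1 - Real.exp x) by ring, div_neg,
          neg_mul_neg, div_mul_div_comm, mul_comm (1 - Real.exp x)]
      rw [hrw, Real.log_div (by positivity) hBα.ne', Real.log_mul hα0.ne' hψx.ne',
        Real.log_rpow hB]
      ring
    exact ode_aux α (-1) hα0 Λ (fun x => 1 - Real.exp x) ψ l (by ring) hφl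
      (hψpos l hneg)
      (by simpa using ((Real.hasDerivAt_exp l).const_sub 1))
      (by
        have := intervalIntegral.integral_hasDerivAt_left
          (hcont.intervalIntegrable l 0)
          (hcont.stronglyMeasurableAtFilter _ _) hcont.continuousAt
        simpa [hf] using this)
      (by ring) heq
  · -- 0 < l
    set f : ℝ → ℝ := fun s => (Real.exp s - 1) ^ (α - 1) with hf
    have hcont : Continuous f := by
      rw [continuous_iff_continuousAt]
      intro s
      exact (Real.continuousAt_rpow_const _ _ (Or.inr hα1)).comp
        ((Real.continuous_exp.sub continuous_const).continuousAt)
    set ψ : ℝ → ℝ := fun x => ∫ s in (0:ℝ)..x, f s with hψdef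
    have hψpos : ∀ x : ℝ, 0 < x → 0 < ψ x := by
      intro x hx
      refine intervalIntegral_pos_of_pos_on (hcont.intervalIntegrable 0 x) ?_ hx
      intro s hs
      have : 1 < Real.exp s := by
        rw [← Real.exp_zero]; exact Real.exp_lt_exp.2 hs.1
      exact Real.rpow_pos_of_pos (by linarith) _
    have hφl : 0 < Real.exp l - 1 := by
      have : 1 < Real.exp l := by
        rw [← Real.exp_zero]; exact Real.exp_lt_exp.2 hpos
      linarith
    have heq : Λ =ᶠ[nhds l]
        fun x => α * Real.log (Real.exp x - 1) - Real.log α - Real.log (ψ x) := by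
      filter_upwards [eventually_gt_nhds hpos] with x hx
      have hB : 0 < Real.exp x - 1 := by
        have : 1 < Real.exp x := by
          rw [← Real.exp_zero]; exact Real.exp_lt_exp.2 hx
        linarith
      have hBα : (0:ℝ) < (Real.exp x - 1) ^ α := Real.rpow_pos_of_pos hB α
      have hψx : 0 < ψ x := hψpos x hx
      rw [hΛ x hx.ne']
      have hint : (∫ s in (0:ℝ)..x, ((Real.exp s - 1) / (Real.exp x - 1)) ^ (α - 1))
          = ψ x / (Real.exp x - 1) ^ (α - 1) := by
        rw [← intervalIntegral.integral_div]
        refine intervalIntegral.integral_congr fun s hs => ?_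
        rw [Set.uIcc_of_le hx.le] at hs
        have hs1 : 0 ≤ Real.exp s - 1 := by
          have : 1 ≤ Real.exp s := by
            rw [← Real.exp_zero]; exact Real.exp_le_exp.2 hs.1
          linarith
        rw [Real.div_rpow hs1 hB.le]
      rw [hint]
      have hrw : α / (Real.exp x - 1) * (ψ x / (Real.exp x - 1) ^ (α - 1))
          = α * ψ x / (Real.exp x - 1) ^ α := by
        have h2 : (Real.exp x - 1) ^ (α - 1) = (Real.exp x - 1) ^ α / (Real.exp x - 1) :=
          Real.rpow_sub_one hB.ne' α
        rw [h2]
        field_simp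
      rw [hrw, Real.log_div (by positivity) hBα.ne', Real.log_mul hα0.ne' hψx.ne',
        Real.log_rpow hB]
      ring
    exact ode_aux α 1 hα0 Λ (fun x => Real.exp x - 1) ψ l (by ring) hφl
      (hψpos l hpos)
      (by simpa using ((Real.hasDerivAt_exp l).sub_const 1))
      (by
        have := intervalIntegral.integral_hasDerivAt_right
          (hcont.intervalIntegrable 0 l)
          (hcont.stronglyMeasurableAtFilter _ _) hcont.continuousAt
        simpa [hf] using this)
      (by ring) heq
end

section
/- Fix $\alpha > 0$. Suppose $\Lambda_1, \Lambda_2: \mathbb{R} \to \mathbb{R}$ are differentiable on $\mathbb{R} \setminus \{0\}$, continuous on $\mathbb{R}$, both satisfy $e^{\Lambda_i(t)} = \frac{1-e^t}{\alpha}\Lambda_i'(t) + e^t$ for all $t \neq 0$, and $\Lambda_1(0) = \Lambda_2(0) = 0$. Then $\Lambda_1 = \Lambda_2$. -/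
open Real

lemma pressure_aux
    (α : ℝ) (hα : 0 < α) (Λ₁ Λ₂ : ℝ → ℝ)
    (hd₁ : ∀ t : ℝ, t ≠ 0 → DifferentiableAt ℝ Λ₁ t)
    (hd₂ : ∀ t : ℝ, t ≠ 0 → DifferentiableAt ℝ Λ₂ t)
    (hc₁ : Continuous Λ₁) (hc₂ : Continuous Λ₂)
    (hode₁ : ∀ t : ℝ, t ≠ 0 →
      Real.exp (Λ₁ t) = (1 - Real.exp t) / α * deriv Λ₁ t + Real.exp t)
    (hode₂ : ∀ t : ℝ, t ≠ 0 →
      Real.exp (Λ₂ t) = (1 - Real.exp t) / α * deriv Λ₂ t + Real.exp t)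
    (h0₁ : Λ₁ 0 = 0) (h0₂ : Λ₂ 0 = 0) (t₀ : ℝ) :
    Λ₁ t₀ ≤ Λ₂ t₀ := by
  by_contra hlt
  push_neg at hlt
  set g : ℝ → ℝ := fun t => Λ₁ t - Λ₂ t with hgdef
  have hgc : Continuous g := hc₁.sub hc₂
  have hg0 : g 0 = 0 := by simp [hgdef, h0₁, h0₂]
  have hgt₀ : 0 < g t₀ := sub_pos.2 hlt
  have hα' : α ≠ 0 := ne_of_gt hα
  have key : ∀ t : ℝ, t ≠ 0 → 0 < g t → 0 < (1 - Real.exp t) * deriv g t := by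
    intro t ht hpos
    have e1 := hode₁ t ht
    have e2 := hode₂ t ht
    have hderiv : deriv g t = deriv Λ₁ t - deriv Λ₂ t :=
      deriv_sub (hd₁ t ht) (hd₂ t ht)
    have hexp : Real.exp (Λ₂ t) < Real.exp (Λ₁ t) :=
      Real.exp_lt_exp.2 (by simp only [hgdef] at hpos; linarith)
    have e1' : (1 - Real.exp t) * deriv Λ₁ t
        = α * (Real.exp (Λ₁ t) - Real.exp t) := by
      field_simp at e1; nlinarith [e1]
    have e2' : (1 - Real.exp t) * deriv Λ₂ t
        = α * (Real.exp (Λ₂ t) - Real.exp t) := by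
      field_simp at e2; nlinarith [e2]
    rw [hderiv]
    nlinarith [e1', e2', hexp, hα]
  have ht₀ : t₀ ≠ 0 := by
    intro h; rw [h, hg0] at hgt₀; exact lt_irrefl _ hgt₀
  rcases lt_or_gt_of_ne ht₀ with h | h
  · -- t₀ < 0
    set S : Set ℝ := Set.Icc t₀ 0 ∩ {t | g t ≤ 0} with hSdef
    have hSc : IsCompact S :=
      isCompact_Icc.inter_right (isClosed_le hgc continuous_const)
    have hSne : S.Nonempty := ⟨0, ⟨h.le, le_refl _⟩, le_of_eq hg0⟩
    obtain ⟨⟨hts, hs0⟩, hgs⟩ := hSc.sInf_mem hSne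
    set s := sInf S with hsdef
    have hgs' : g s ≤ 0 := hgs
    have hts' : t₀ < s := lt_of_le_of_ne hts (by
      intro h'; rw [← h'] at hgs'; linarith)
    have hpos : ∀ t ∈ Set.Ico t₀ s, 0 < g t := by
      rintro t ⟨h1, h2⟩
      by_contra hnp
      push_neg at hnp
      have : t ∈ S := ⟨⟨h1, le_trans h2.le hs0⟩, hnp⟩
      exact absurd (csInf_le hSc.bddBelow this) (not_le.2 h2)
    have hmono : StrictMonoOn g (Set.Icc t₀ s) := by
      apply strictMonoOn_of_deriv_pos (convex_Icc t₀ s) hgc.continuousOn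
      intro x hx
      rw [interior_Icc] at hx
      have hx0 : x < 0 := lt_of_lt_of_le hx.2 hs0
      have hk := key x (ne_of_lt hx0) (hpos x ⟨hx.1.le, hx.2⟩)
      have he : 0 < 1 - Real.exp x := by
        have : Real.exp x < 1 := Real.exp_lt_one_iff.2 hx0
        linarith
      nlinarith [hk, he]
    have := hmono (Set.left_mem_Icc.2 hts'.le) (Set.right_mem_Icc.2 hts'.le) hts'
    linarith [hgs', hgt₀, this]
  · -- 0 < t₀
    set S : Set ℝ := Set.Icc 0 t₀ ∩ {t | g t ≤ 0} with hSdef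
    have hSc : IsCompact S :=
      isCompact_Icc.inter_right (isClosed_le hgc continuous_const)
    have hSne : S.Nonempty := ⟨0, ⟨le_refl _, h.le⟩, le_of_eq hg0⟩
    obtain ⟨⟨hs0, hst⟩, hgs⟩ := hSc.sSup_mem hSne
    set s := sSup S with hsdef
    have hgs' : g s ≤ 0 := hgs
    have hst' : s < t₀ := lt_of_le_of_ne hst (by
      intro h'; rw [h'] at hgs'; linarith)
    have hpos : ∀ t ∈ Set.Ioc s t₀, 0 < g t := by
      rintro t ⟨h1, h2⟩
      by_contra hnp
      push_neg at hnp
      have : t ∈ S := ⟨⟨le_trans hs0 h1.le, h2⟩, hnp⟩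
      exact absurd (le_csSup hSc.bddAbove this) (not_le.2 h1)
    have hanti : StrictAntiOn g (Set.Icc s t₀) := by
      apply strictAntiOn_of_deriv_neg (convex_Icc s t₀) hgc.continuousOn
      intro x hx
      rw [interior_Icc] at hx
      have hx0 : 0 < x := lt_of_le_of_lt hs0 hx.1
      have hk := key x (ne_of_gt hx0) (hpos x ⟨hx.1, hx.2.le⟩)
      have he : 1 - Real.exp x < 0 := by
        have : 1 < Real.exp x := Real.one_lt_exp_iff.2 hx0
        linarith
      nlinarith [hk, he]
    have := hanti (Set.left_mem_Icc.2 hst'.le) (Set.right_mem_Icc.2 hst'.le) hst'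
    linarith [hgs', hgt₀, this]

/-- Uniqueness for the pressure ODE `e^Λ = (1-e^t)/α · Λ' + e^t`, `Λ(0)=0`. -/
theorem pressure_ODE_unique
    (α : ℝ) (hα : 0 < α) (Λ₁ Λ₂ : ℝ → ℝ)
    (hd₁ : ∀ t : ℝ, t ≠ 0 → DifferentiableAt ℝ Λ₁ t)
    (hd₂ : ∀ t : ℝ, t ≠ 0 → DifferentiableAt ℝ Λ₂ t)
    (hc₁ : Continuous Λ₁) (hc₂ : Continuous Λ₂)
    (hode₁ : ∀ t : ℝ, t ≠ 0 →
      Real.exp (Λ₁ t) = (1 - Real.exp t) / α * deriv Λ₁ t + Real.exp t)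
    (hode₂ : ∀ t : ℝ, t ≠ 0 →
      Real.exp (Λ₂ t) = (1 - Real.exp t) / α * deriv Λ₂ t + Real.exp t)
    (h0₁ : Λ₁ 0 = 0) (h0₂ : Λ₂ 0 = 0) :
    Λ₁ = Λ₂ := by
  funext t
  exact le_antisymm
    (pressure_aux α hα Λ₁ Λ₂ hd₁ hd₂ hc₁ hc₂ hode₁ hode₂ h0₁ h0₂ t)
    (pressure_aux α hα Λ₂ Λ₁ hd₂ hd₁ hc₂ hc₁ hode₂ hode₁ h0₂ h0₁ t)
end

section
/- The function $f(z) = 2(z - e^z)$ is injective on the open upper half-strip $\{z : 0 < \mathrm{Im}(z) < \pi\}$. -/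
open Complex

lemma hasDerivAt_im_comp {h : ℝ → ℂ} {c : ℂ} {t : ℝ} (hh : HasDerivAt h c t) :
    HasDerivAt (fun t => (h t).im) c.im t := by
  exact Complex.imCLM.hasFDerivAt.comp_hasDerivAt t hh

/-- `f(z) = 2(z - e^z)` is injective on the open strip `0 < Im z < π`. -/
theorem two_z_sub_exp_injOn_strip :
    Set.InjOn (fun z : ℂ => 2 * (z - Complex.exp z))
      {z : ℂ | 0 < z.im ∧ z.im < Real.pi} := by
  intro z₁ h₁ z₂ h₂ hf
  by_contra hne
  set w : ℂ := z₂ - z₁ with hw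
  have hw0 : w ≠ 0 := sub_ne_zero.2 (Ne.symm hne)
  set γ : ℝ → ℂ := fun t => z₁ + (t : ℂ) * w with hγ
  set φ : ℝ → ℝ := fun t => ((2 * (γ t - Complex.exp (γ t))) / w).im with hφ
  have hmem : ∀ t ∈ Set.Icc (0:ℝ) 1, 0 < (γ t).im ∧ (γ t).im < Real.pi := by
    intro t ht
    have him : (γ t).im = (1 - t) * z₁.im + t * z₂.im := by
      simp [hγ, hw, Complex.add_im, Complex.mul_im, Complex.sub_im]
      ring
    rw [him]
    obtain ⟨ht0, ht1⟩ := ht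
    constructor
    · rcases eq_or_lt_of_le ht1 with h | h
      · rw [h]; simpa using h₂.1
      · nlinarith [mul_pos (by linarith : (0:ℝ) < 1 - t) h₁.1,
          mul_nonneg ht0 h₂.1.le]
    · rcases eq_or_lt_of_le ht1 with h | h
      · rw [h]; simpa using h₂.2
      · nlinarith [mul_pos (by linarith : (0:ℝ) < 1 - t) (by linarith [h₁.2] : 0 < Real.pi - z₁.im),
          mul_nonneg ht0 (by linarith [h₂.2] : 0 ≤ Real.pi - z₂.im)]
  have hderiv : ∀ t : ℝ, HasDerivAt φ ((2 * (1 - Complex.exp (γ t))).im) t := by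
    intro t
    have hg : HasDerivAt γ w t := by
      simpa [hγ] using ((hasDerivAt_id (t:ℂ)).mul_const w).comp_ofReal.const_add z₁
    have hF : HasDerivAt (fun z : ℂ => 2 * (z - Complex.exp z)) (2 * (1 - Complex.exp (γ t)))
        (γ t) := ((hasDerivAt_id _).sub (Complex.hasDerivAt_exp _)).const_mul 2
    have hc := (hF.comp t hg).div_const w
    have h2 : 2 * (1 - Complex.exp (γ t)) * w / w = 2 * (1 - Complex.exp (γ t)) := by
      field_simp
    rw [h2] at hc
    exact hasDerivAt_im_comp hc
  have hneg : ∀ t ∈ Set.Icc (0:ℝ) 1, (2 * (1 - Complex.exp (γ t))).im < 0 := by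
    intro t ht
    obtain ⟨hy0, hyπ⟩ := hmem t ht
    have hs : 0 < Real.sin (γ t).im := Real.sin_pos_of_pos_of_lt_pi hy0 hyπ
    have he : (2 * (1 - Complex.exp (γ t))).im
        = -2 * (Real.exp (γ t).re * Real.sin (γ t).im) := by
      simp [Complex.mul_im, Complex.sub_im, Complex.exp_im]
    rw [he]
    nlinarith [Real.exp_pos (γ t).re]
  have hanti : StrictAntiOn φ (Set.Icc (0:ℝ) 1) := by
    apply strictAntiOn_of_deriv_neg (convex_Icc 0 1)
    · exact fun t _ => (hderiv t).continuousAt.continuousWithinAt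
    · intro t ht
      rw [(hderiv t).deriv]
      exact hneg t (Set.mem_Icc_of_Ioo (by simpa using ht))
  have h10 : φ 1 < φ 0 := hanti (Set.left_mem_Icc.2 zero_le_one)
      (Set.right_mem_Icc.2 zero_le_one) zero_lt_one
  have hγ0 : γ 0 = z₁ := by simp [hγ]
  have hγ1 : γ 1 = z₂ := by simp [hγ, hw]
  have : φ 0 = φ 1 := by
    simp only [hφ, hγ0, hγ1]
    rw [show (2:ℂ) * (z₁ - Complex.exp z₁) = 2 * (z₂ - Complex.exp z₂) from hf]
  linarith
end

section
/- Suppose $\varphi$ is holomorphic in a domain containing $(-\infty, -2)$, and define $G(z, \lambda) = (e^{\lambda} - 1)^2 \varphi(z(e^{\lambda}-1)^2 + 2\lambda - 2e^{\lambda})$. Then for all $\lambda \neq 0$ and all $z$ such that the argument of $\varphi$ lies in its domain, $G$ satisfies the PDE $\frac{\partial G}{\partial z}(1 - e^{\lambda} z) + \frac{e^{\lambda}-1}{2}\frac{\partial G}{\partial \lambda} = e^{\lambda} G$. -/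
open Complex

/-- If `φ` is holomorphic on a domain containing `(-∞,-2)` and
`G(z,λ) = (e^λ-1)² φ(z(e^λ-1)² + 2λ - 2e^λ)`, then `G` satisfies the generating
function PDE `G_z (1 - e^λ z) + (e^λ-1)/2 · G_λ = e^λ G` wherever the argument of `φ`
lies in the domain and `λ ≠ 0`. -/
theorem generating_function_characteristic_solution
    (D : Set ℂ) (hD : IsOpen D)
    (hDslit : {w : ℂ | w.im = 0 ∧ w.re < -2} ⊆ D)
    (φ : ℂ → ℂ) (hφ : DifferentiableOn ℂ φ D)
    (G : ℂ → ℝ → ℂ)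
    (hG : ∀ (z : ℂ) (l : ℝ),
      G z l = ((Real.exp l : ℂ) - 1) ^ 2 *
        φ (z * ((Real.exp l : ℂ) - 1) ^ 2 + 2 * (l : ℂ) - 2 * (Real.exp l : ℂ)))
    (z : ℂ) (l : ℝ) (hl : l ≠ 0)
    (harg : z * ((Real.exp l : ℂ) - 1) ^ 2 + 2 * (l : ℂ) - 2 * (Real.exp l : ℂ) ∈ D) :
    deriv (fun z' => G z' l) z * (1 - (Real.exp l : ℂ) * z) +
        ((Real.exp l : ℂ) - 1) / 2 * deriv (fun l' => G z l') l =
      (Real.exp l : ℂ) * G z l := by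
  set E : ℂ := (Real.exp l : ℂ) with hEdef
  have hφat : DifferentiableAt ℂ φ (z * (E - 1) ^ 2 + 2 * (l : ℂ) - 2 * E) :=
    (hφ _ harg).differentiableAt (hD.mem_nhds harg)
  set d : ℂ := deriv φ (z * (E - 1) ^ 2 + 2 * (l : ℂ) - 2 * E) with hd
  have hφ' : HasDerivAt φ d (z * (E - 1) ^ 2 + 2 * (l : ℂ) - 2 * E) := hφat.hasDerivAt
  -- z-derivative
  have hz : HasDerivAt (fun z' => G z' l) ((E - 1) ^ 2 * (d * (E - 1) ^ 2)) z := by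
    have hinner : HasDerivAt (fun z' : ℂ => z' * (E - 1) ^ 2 + 2 * (l : ℂ) - 2 * E)
        ((E - 1) ^ 2) z := by
      simpa using (((hasDerivAt_id z).mul_const ((E - 1) ^ 2)).add_const
        (2 * (l : ℂ))).sub_const (2 * E)
    have hcomp : HasDerivAt (fun z' : ℂ =>
        φ (z' * (E - 1) ^ 2 + 2 * (l : ℂ) - 2 * E)) (d * (E - 1) ^ 2) z :=
      hφ'.comp z hinner
    have heq : (fun z' => G z' l) = fun z' : ℂ => (E - 1) ^ 2 *
        φ (z' * (E - 1) ^ 2 + 2 * (l : ℂ) - 2 * E) := funext fun z' => hG z' l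
    rw [heq]
    exact hcomp.const_mul _
  -- λ-derivative
  have hEd : HasDerivAt (fun l' : ℝ => ((Real.exp l' : ℝ) : ℂ)) E l :=
    (Real.hasDerivAt_exp l).ofReal_comp
  have hcoe : HasDerivAt (fun l' : ℝ => (l' : ℂ)) 1 l := by
    simpa using (hasDerivAt_id l).ofReal_comp
  have hc : HasDerivAt (fun l' : ℝ => ((Real.exp l' : ℂ) - 1) ^ 2)
      (E * (E - 1) + (E - 1) * E) l := by
    simpa only [pow_two, Pi.mul_def] using (hEd.sub_const 1).mul (hEd.sub_const 1)
  have hu : HasDerivAt (fun l' : ℝ =>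
      z * ((Real.exp l' : ℂ) - 1) ^ 2 + 2 * (l' : ℂ) - 2 * (Real.exp l' : ℂ))
      (z * (E * (E - 1) + (E - 1) * E) + 2 * 1 - 2 * E) l :=
    ((hc.const_mul z).add (hcoe.const_mul 2)).sub (hEd.const_mul 2)
  have hφu : HasDerivAt (fun l' : ℝ =>
      φ (z * ((Real.exp l' : ℂ) - 1) ^ 2 + 2 * (l' : ℂ) - 2 * (Real.exp l' : ℂ)))
      ((z * (E * (E - 1) + (E - 1) * E) + 2 * 1 - 2 * E) • d) l := by
    have := (hφ'.hasFDerivAt.restrictScalars ℝ).comp_hasDerivAt l hu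
    simpa [Function.comp_def] using this
  have hl' : HasDerivAt (fun l' => G z l')
      ((E * (E - 1) + (E - 1) * E) *
          φ (z * (E - 1) ^ 2 + 2 * (l : ℂ) - 2 * E) +
        (E - 1) ^ 2 * ((z * (E * (E - 1) + (E - 1) * E) + 2 * 1 - 2 * E) • d)) l := by
    have heq : (fun l' => G z l') = fun l' : ℝ => ((Real.exp l' : ℂ) - 1) ^ 2 *
        φ (z * ((Real.exp l' : ℂ) - 1) ^ 2 + 2 * (l' : ℂ) - 2 * (Real.exp l' : ℂ)) :=
      funext fun l' => hG z l'
    rw [heq]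
    exact hc.mul hφu
  rw [hz.deriv, hl'.deriv, hG z l]
  simp only [smul_eq_mul]
  ring
end
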